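/- arXiv:2303.04680 — 3 statements merged into one kernel-verified Lean document; each statement's English description precedes it below -/
import Mathlib

section
/- Let d ≥ 1 be an integer, h ∈ (1/2, 1) and t ≥ 0. Then the function on ℝ^d given by x ↦ ∫_0^t ∏_{ℓ=1}^d (s - x_ℓ)_+^{(h-1)/d - 1/2} ds is square-integrable, i.e. it belongs to L²(ℝ^d). -/
/-!
Write `φ(y) = y₊ ^ p` with `p = (h - 1)/d - 1/2 ∈ (-1, -1/2)`. By Tonelli, the squared `L²` norm is
at most `∫∫_{(0,t]²} ∏_ℓ ∫ φ(s - y) φ(s' - y) dy ds ds'`. Rescaling `y` by `|s - s'|` turns each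
factor into `C |s - s'| ^ (2p + 1)` with `C = ∫ φ(v) φ(v + 1) dv`, which is finite because `p > -1`
(integrability at `0`) and `2p < -1` (integrability at `∞`). What remains is
`C ^ d ∫∫_{(0,t]²} |s - s'| ^ (2h - 2) ds ds'`, finite because `2h - 2 > -1`.
-/

open MeasureTheory Set Function
open scoped ENNReal

theorem lintegral_fin_prod_eq_pow {α : Type*} [MeasurableSpace α] (μ : Measure α) [SigmaFinite μ]
    {f : α → ℝ≥0∞} (hf : Measurable f) (n : ℕ) :
    ∫⁻ x : Fin n → α, ∏ i, f (x i) ∂Measure.pi (fun _ => μ) = (∫⁻ y, f y ∂μ) ^ n := by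
  induction n with
  | zero => simp
  | succ n ih =>
    rw [← (measurePreserving_piFinSuccAbove (fun _ => μ) 0).symm.lintegral_comp_emb
      (MeasurableEquiv.measurableEmbedding _)]
    simp only [MeasurableEquiv.piFinSuccAbove_symm_apply, Fin.insertNthEquiv_zero,
      Fin.consEquiv_apply, Fin.prod_univ_succ, Fin.cons_zero, Fin.cons_succ]
    rw [lintegral_prod_mul (g := fun y : Fin n → α => ∏ i, f (y i)) hf.aemeasurable
      (Finset.measurable_prod _ fun i _ => hf.comp (measurable_pi_apply i)).aemeasurable,
      ih, pow_succ']

theorem locallyIntegrable_abs_rpow {β : ℝ} (hβ : -1 < β) :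
    LocallyIntegrable (fun u : ℝ => |u| ^ β) :=
  locallyIntegrable_of_norm_le_rpow (by simp) (α := -β) (C := 1) (by simp; linarith)
    (ae_of_all _ fun u => by simp [abs_of_nonneg (Real.rpow_nonneg (abs_nonneg u) β)])
    (by fun_prop : Measurable fun u : ℝ => |u| ^ β).aestronglyMeasurable

theorem memLp_two_integral_of_lintegral_lt_top {X S E : Type*} [MeasurableSpace X]
    [MeasurableSpace S] [NormedAddCommGroup E] [NormedSpace ℝ E] {μ : Measure X} {ν : Measure S}
    [SFinite μ] [SFinite ν] {g : X → S → E} (hg : StronglyMeasurable (uncurry g))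
    (hfin : ∫⁻ s, ∫⁻ s', ∫⁻ x, ‖g x s‖ₑ * ‖g x s'‖ₑ ∂μ ∂ν ∂ν < ⊤) :
    MemLp (fun x => ∫ s, g x s ∂ν) 2 μ := by
  have hm : Measurable (uncurry fun x s => ‖g x s‖ₑ) := hg.enorm
  have hm₃ : Measurable fun q : (X × S) × S => ‖g q.1.1 q.1.2‖ₑ * ‖g q.1.1 q.2‖ₑ :=
    (hm.comp measurable_fst).mul (hm.comp (measurable_fst.fst.prodMk measurable_snd))
  refine ⟨hg.integral_prod_right'.aestronglyMeasurable, ?_⟩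
  rw [eLpNorm_lt_top_iff_lintegral_rpow_enorm_lt_top two_ne_zero ENNReal.ofNat_ne_top]
  calc ∫⁻ x, ‖∫ s, g x s ∂ν‖ₑ ^ (2 : ℝ≥0∞).toReal ∂μ
      ≤ ∫⁻ x, (∫⁻ s, ‖g x s‖ₑ ∂ν) ^ 2 ∂μ := lintegral_mono fun x => by
        simpa using pow_le_pow_left' (enorm_integral_le_lintegral_enorm _) 2
    _ = ∫⁻ x, ∫⁻ s, ∫⁻ s', ‖g x s‖ₑ * ‖g x s'‖ₑ ∂ν ∂ν ∂μ := by
        refine lintegral_congr fun x => ?_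
        have hx : Measurable fun s => ‖g x s‖ₑ := hm.comp measurable_prodMk_left
        rw [sq, lintegral_lintegral_mul hx.aemeasurable hx.aemeasurable]
    _ = ∫⁻ s, ∫⁻ s', ∫⁻ x, ‖g x s‖ₑ * ‖g x s'‖ₑ ∂μ ∂ν ∂ν := by
        rw [lintegral_lintegral_swap hm₃.lintegral_prod_right'.aemeasurable]
        refine lintegral_congr fun s => lintegral_lintegral_swap ?_
        exact (hm₃.comp ((measurable_fst.prodMk measurable_const).prodMk
          measurable_snd)).aemeasurable
    _ < ⊤ := hfin

theorem lintegral_Ioc_lintegral_Ioc_abs_sub_rpow_lt_top {β : ℝ} (hβ : -1 < β) (a b : ℝ) :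
    ∫⁻ s in Ioc a b, ∫⁻ s' in Ioc a b, ENNReal.ofReal (|s' - s| ^ β) < ⊤ := by
  set M := ∫⁻ u in Icc (a - b) (b - a), ENNReal.ofReal (|u| ^ β)
  have hM : M < ⊤ :=
    ((locallyIntegrable_abs_rpow hβ).integrableOn_isCompact isCompact_Icc).lintegral_lt_top
  have hinner : ∀ s ∈ Ioc a b, ∫⁻ s' in Ioc a b, ENNReal.ofReal (|s' - s| ^ β) ≤ M := by
    intro s hs
    calc ∫⁻ s' in Ioc a b, ENNReal.ofReal (|s' - s| ^ β)
        ≤ ∫⁻ s', (Icc (a - b) (b - a)).indicator (fun u => ENNReal.ofReal (|u| ^ β)) (s' - s) := by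
          rw [← lintegral_indicator measurableSet_Ioc]
          refine lintegral_mono fun s' => ?_
          by_cases hs' : s' ∈ Ioc a b
          · have hmem : s' - s ∈ Icc (a - b) (b - a) :=
              ⟨by linarith [hs.2, hs'.1], by linarith [hs.1, hs'.2]⟩
            rw [indicator_of_mem hs', indicator_of_mem hmem]
          · simp [indicator_of_notMem hs']
      _ = M := by rw [lintegral_sub_right_eq_self, lintegral_indicator measurableSet_Icc]
  calc _ ≤ ∫⁻ _ in Ioc a b, M := setLIntegral_mono measurable_const hinner
    _ = M * volume (Ioc a b) := setLIntegral_const _ _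
    _ < ⊤ := ENNReal.mul_lt_top hM (by simp [Real.volume_Ioc])

namespace HermiteKernel

noncomputable def posPartRpow (p y : ℝ) : ℝ := max y 0 ^ p

variable {p : ℝ}

lemma posPartRpow_nonneg (p y : ℝ) : 0 ≤ posPartRpow p y :=
  Real.rpow_nonneg (le_max_right _ _) _

@[fun_prop]
lemma measurable_posPartRpow (p : ℝ) : Measurable (posPartRpow p) := by
  unfold posPartRpow
  fun_prop

lemma posPartRpow_of_nonpos (hp : p ≠ 0) {y : ℝ} (hy : y ≤ 0) : posPartRpow p y = 0 := by
  rw [posPartRpow, max_eq_right hy, Real.zero_rpow hp]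

lemma posPartRpow_of_pos {y : ℝ} (hy : 0 < y) : posPartRpow p y = y ^ p := by
  rw [posPartRpow, max_eq_left hy.le]

lemma posPartRpow_mul {r : ℝ} (hr : 0 ≤ r) (y : ℝ) :
    posPartRpow p (r * y) = r ^ p * posPartRpow p y := by
  rw [posPartRpow, posPartRpow, ← Real.mul_rpow hr (le_max_right _ _), mul_max_of_nonneg _ _ hr,
    mul_zero]

noncomputable def overlapConst (p : ℝ) : ℝ≥0∞ :=
  ∫⁻ v, ENNReal.ofReal (posPartRpow p v * posPartRpow p (v + 1))

lemma overlapConst_lt_top (hp₁ : -1 < p) (hp₂ : p < -1 / 2) : overlapConst p < ⊤ := by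
  have hp₀ : p ≤ 0 := by linarith
  have hsupp : support (fun v => ENNReal.ofReal (posPartRpow p v * posPartRpow p (v + 1)))
      ⊆ Ioi 0 := fun v hv => by
    by_contra hv'
    exact hv (by simp [posPartRpow_of_nonpos (by linarith) (not_lt.1 hv')])
  have hnear : ∫⁻ v in Ioc 0 1, ENNReal.ofReal (posPartRpow p v * posPartRpow p (v + 1))
      ≤ ∫⁻ v in Ioc 0 1, ENNReal.ofReal (v ^ p) := by
    refine setLIntegral_mono (by fun_prop) fun v hv => ENNReal.ofReal_le_ofReal ?_
    rw [posPartRpow_of_pos hv.1, posPartRpow_of_pos (by linarith [hv.1])]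
    exact mul_le_of_le_one_right (Real.rpow_nonneg hv.1.le _)
      (Real.rpow_le_one_of_one_le_of_nonpos (by linarith [hv.1]) hp₀)
  have hfar : ∫⁻ v in Ioi 1, ENNReal.ofReal (posPartRpow p v * posPartRpow p (v + 1))
      ≤ ∫⁻ v in Ioi 1, ENNReal.ofReal (v ^ (p + p)) := by
    refine setLIntegral_mono (by fun_prop) fun v (hv : 1 < v) => ENNReal.ofReal_le_ofReal ?_
    have hv₀ : 0 < v := one_pos.trans hv
    rw [posPartRpow_of_pos hv₀, posPartRpow_of_pos (by linarith), Real.rpow_add hv₀]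
    exact mul_le_mul_of_nonneg_left (Real.rpow_le_rpow_of_nonpos hv₀ (by linarith) hp₀)
      (by positivity)
  have hint_near : IntegrableOn (fun v : ℝ => v ^ p) (Ioc 0 1) := by
    rw [integrableOn_Ioc_iff_integrableOn_Ioo]
    exact (intervalIntegral.integrableOn_Ioo_rpow_iff one_pos).2 hp₁
  have hint_far : IntegrableOn (fun v : ℝ => v ^ (p + p)) (Ioi 1) :=
    (integrableOn_Ioi_rpow_iff one_pos).2 (by linarith)
  rw [overlapConst, ← setLIntegral_eq_of_support_subset hsupp,
    ← Ioc_union_Ioi_eq_Ioi zero_le_one]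
  calc _ ≤ _ := lintegral_union_le _ _ _
    _ < ⊤ := ENNReal.add_lt_top.2 ⟨hnear.trans_lt hint_near.lintegral_lt_top,
        hfar.trans_lt hint_far.lintegral_lt_top⟩

lemma lintegral_posPartRpow_sub_mul_sub (p : ℝ) {s s' : ℝ} (hss' : s ≠ s') :
    ∫⁻ y, ENNReal.ofReal (posPartRpow p (s - y) * posPartRpow p (s' - y))
      = ENNReal.ofReal (|s' - s| ^ (2 * p + 1)) * overlapConst p := by
  wlog hlt : s < s' generalizing s s'
  · simpa only [mul_comm, abs_sub_comm] using
      this hss'.symm (lt_of_le_of_ne (not_lt.1 hlt) hss'.symm)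
  obtain ⟨r, hr, rfl⟩ : ∃ r > 0, s' = s + r := ⟨s' - s, sub_pos.2 hlt, by ring⟩
  have hφ : Measurable fun u => ENNReal.ofReal (posPartRpow p u * posPartRpow p (u + r)) := by
    fun_prop
  calc ∫⁻ y, ENNReal.ofReal (posPartRpow p (s - y) * posPartRpow p (s + r - y))
      = ∫⁻ u, ENNReal.ofReal (posPartRpow p u * posPartRpow p (u + r)) := by
        simpa only [sub_add_eq_add_sub] using lintegral_sub_left_eq_self
          (fun u => ENNReal.ofReal (posPartRpow p u * posPartRpow p (u + r))) s
    _ = ENNReal.ofReal r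
          * ∫⁻ v, ENNReal.ofReal (posPartRpow p (r * v) * posPartRpow p (r * v + r)) := by
        conv_lhs => rw [← Real.smul_map_volume_mul_left hr.ne']
        rw [lintegral_smul_measure,
          lintegral_map hφ (measurable_const_mul r), abs_of_pos hr, smul_eq_mul]
    _ = ENNReal.ofReal r * ∫⁻ v, ENNReal.ofReal (r ^ (2 * p))
          * ENNReal.ofReal (posPartRpow p v * posPartRpow p (v + 1)) := by
        congr 1
        refine lintegral_congr fun v => ?_
        rw [show r * v + r = r * (v + 1) by ring, posPartRpow_mul hr.le, posPartRpow_mul hr.le,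
          ← ENNReal.ofReal_mul (by positivity), two_mul, Real.rpow_add hr]
        ring_nf
    _ = ENNReal.ofReal (|s + r - s| ^ (2 * p + 1)) * overlapConst p := by
        rw [lintegral_const_mul _ (by fun_prop), ← mul_assoc, ← ENNReal.ofReal_mul hr.le,
          add_sub_cancel_left, abs_of_pos hr, Real.rpow_add_one hr.ne', mul_comm r, overlapConst]

lemma lintegral_enorm_prod_posPartRpow_sub_mul (p : ℝ) (d : ℕ) {s s' : ℝ} (hss' : s ≠ s') :
    ∫⁻ x : Fin d → ℝ, ‖∏ ℓ, posPartRpow p (s - x ℓ)‖ₑ * ‖∏ ℓ, posPartRpow p (s' - x ℓ)‖ₑ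
      = (ENNReal.ofReal (|s' - s| ^ (2 * p + 1)) * overlapConst p) ^ d := by
  have hsplit : ∀ x : Fin d → ℝ,
      ‖∏ ℓ, posPartRpow p (s - x ℓ)‖ₑ * ‖∏ ℓ, posPartRpow p (s' - x ℓ)‖ₑ
        = ∏ ℓ, ENNReal.ofReal (posPartRpow p (s - x ℓ) * posPartRpow p (s' - x ℓ)) := by
    intro x
    have h₀ : ∀ ℓ ∈ Finset.univ, 0 ≤ posPartRpow p (s - x ℓ) * posPartRpow p (s' - x ℓ) :=
      fun ℓ _ => mul_nonneg (posPartRpow_nonneg _ _) (posPartRpow_nonneg _ _)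
    rw [← enorm_mul, ← Finset.prod_mul_distrib, Real.enorm_of_nonneg (Finset.prod_nonneg h₀),
      ENNReal.ofReal_prod_of_nonneg h₀]
  simp_rw [hsplit]
  rw [volume_pi, lintegral_fin_prod_eq_pow volume
    (f := fun y => ENNReal.ofReal (posPartRpow p (s - y) * posPartRpow p (s' - y))) (by fun_prop),
    lintegral_posPartRpow_sub_mul_sub p hss']

lemma lintegral_Ioc_lintegral_Ioc_overlap_lt_top (hp₁ : -1 < p) (hp₂ : p < -1 / 2) {d : ℕ}
    (hβ : -1 < (2 * p + 1) * d) (a b : ℝ) :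
    ∫⁻ s in Ioc a b, ∫⁻ s' in Ioc a b, ∫⁻ x : Fin d → ℝ,
      ‖∏ ℓ, posPartRpow p (s - x ℓ)‖ₑ * ‖∏ ℓ, posPartRpow p (s' - x ℓ)‖ₑ < ⊤ := by
  have hoverlap : ∀ s, ∀ᵐ s' ∂volume.restrict (Ioc a b),
      ∫⁻ x : Fin d → ℝ, ‖∏ ℓ, posPartRpow p (s - x ℓ)‖ₑ * ‖∏ ℓ, posPartRpow p (s' - x ℓ)‖ₑ
        = overlapConst p ^ d * ENNReal.ofReal (|s' - s| ^ ((2 * p + 1) * d)) := by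
    intro s
    filter_upwards [ae_restrict_of_ae (volume.ae_ne s)] with s' hs'
    rw [lintegral_enorm_prod_posPartRpow_sub_mul p d hs'.symm, mul_pow, mul_comm,
      ← ENNReal.ofReal_pow (by positivity), Real.rpow_mul_natCast (abs_nonneg _)]
  calc _ = ∫⁻ s in Ioc a b, ∫⁻ s' in Ioc a b,
        overlapConst p ^ d * ENNReal.ofReal (|s' - s| ^ ((2 * p + 1) * d)) :=
        lintegral_congr fun s => lintegral_congr_ae (hoverlap s)
    _ = overlapConst p ^ d * ∫⁻ s in Ioc a b, ∫⁻ s' in Ioc a b,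
        ENNReal.ofReal (|s' - s| ^ ((2 * p + 1) * d)) := by
        rw [← lintegral_const_mul' _ _ (ENNReal.pow_ne_top (overlapConst_lt_top hp₁ hp₂).ne)]
        refine lintegral_congr fun s => ?_
        rw [lintegral_const_mul _ (by fun_prop)]
    _ < ⊤ := ENNReal.mul_lt_top (ENNReal.pow_lt_top (overlapConst_lt_top hp₁ hp₂))
        (lintegral_Ioc_lintegral_Ioc_abs_sub_rpow_lt_top hβ a b)

end HermiteKernel

open HermiteKernel

theorem hermite_kernel_memL2_general (d : ℕ) (hd : 1 ≤ d) (h : ℝ) (hh : h ∈ Set.Ioo (1/2 : ℝ) 1)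
    (t : ℝ) :
    MemLp (fun x : Fin d → ℝ =>
        ∫ s in Set.Ioc (0:ℝ) t, ∏ ℓ, (max (s - x ℓ) 0) ^ ((h - 1) / d - 1/2)) 2
      (volume : Measure (Fin d → ℝ)) := by
  set p := (h - 1) / d - 1 / 2 with hp
  have hd₁ : (1 : ℝ) ≤ d := by exact_mod_cast hd
  have hd₀ : (0 : ℝ) < d := by linarith
  have hp₁ : -1 < p := by
    have : -1 / 2 < (h - 1) / d := by
      rw [lt_div_iff₀ hd₀]
      nlinarith [hh.1]
    linarith
  have hp₂ : p < -1 / 2 := by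
    have : (h - 1) / d < 0 := div_neg_of_neg_of_pos (by linarith [hh.2]) hd₀
    linarith
  have hβ : -1 < (2 * p + 1) * d := by
    have : (2 * p + 1) * d = 2 * (h - 1) := by rw [hp]; field_simp; ring
    linarith [hh.1]
  have hg : StronglyMeasurable (uncurry fun (x : Fin d → ℝ) s => ∏ ℓ, posPartRpow p (s - x ℓ)) :=
    (by fun_prop : Measurable _).stronglyMeasurable
  exact memLp_two_integral_of_lintegral_lt_top hg
    (lintegral_Ioc_lintegral_Ioc_overlap_lt_top hp₁ hp₂ hβ 0 t)

/-- The kernel of the Hermite process: for `h ∈ (1/2,1)` and `t ≥ 0`, the function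
`x ↦ ∫_0^t ∏_ℓ (s - x_ℓ)_+^{(h-1)/d - 1/2} ds` is in `L²(ℝ^d)`. -/
theorem hermite_kernel_memL2 (d : ℕ) (hd : 1 ≤ d) (h : ℝ) (hh : h ∈ Set.Ioo (1/2 : ℝ) 1)
    (t : ℝ) (ht : 0 ≤ t) :
    MemLp (fun x : Fin d → ℝ =>
        ∫ s in Set.Ioc (0:ℝ) t, ∏ ℓ, (max (s - x ℓ) 0) ^ ((h - 1) / d - 1/2)) 2
      (volume : Measure (Fin d → ℝ)) :=
  hermite_kernel_memL2_general d hd h hh t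
end

section
/- Let d ≥ 1, 1/2 < a < b < 1 and ε > 0 be such that 1/2 < a - ε < b + ε < 1. Then there exists a constant c_ε > 0 such that for all h₁, h₂ with a ≤ h₁ ≤ h₂ ≤ b, all u ≥ 0 and all x ∈ ℝ^d, |∫_0^u (f_{h₁}(s,x) - f_{h₂}(s,x)) ds| ≤ c_ε |h₁ - h₂| ∫_0^u (f_{a-ε}(s,x) + f_{b+ε}(s,x)) ds. -/
open MeasureTheory

/-- The Hermite kernel `f_h(s,x) = ∏_ℓ (s-x_ℓ)_+^{(h-1)/d - 1/2}`. -/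
noncomputable def hermiteKernel (d : ℕ) (h : ℝ) (s : ℝ) (x : Fin d → ℝ) : ℝ :=
  ∏ ℓ, (max (s - x ℓ) 0) ^ ((h - 1) / d - 1/2)

/-!
Write `f_h(s, x) = P(s)^{e(h)}` with `P(s) = ∏ ℓ (s - x ℓ)_+` and `e(h) = (h - 1)/d - 1/2`, which is
affine in `h` with slope `1/d`. Pointwise, the mean value theorem for `p ↦ P^p = exp (p log P)` gives
`|P^{e₁} - P^{e₂}| ≤ |e₁ - e₂| |log P| max(P^{e₁}, P^{e₂})`, and the logarithm is absorbed by
shifting the exponent by `ε/d`: into `P^{e(b+ε)}` where `P ≥ 1` and into `P^{e(a-ε)}` where `P ≤ 1`.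
Integrating gives the bound whenever `f_{a-ε} + f_{b+ε}` is integrable.

Otherwise both sides vanish, the left one because the Bochner integral of a non-integrable function
is `0`. Since `e(h) ∈ (-1, -1/2)`, near the largest `x ℓ` the kernel behaves like
`(s - max x)^{k e(h)}`, where `k` is the number of coordinates attaining the maximum, so it is
integrable iff `k = 1`, independently of `h`; and `f_{h₁} - f_{h₂}` is as singular as `f_{h₁}`.
-/

open Real Set Finset

namespace Real

lemma abs_exp_mul_sub_exp_mul_le {L p₁ p₂ q γ : ℝ} (hL : 0 ≤ L) (hγ : 0 < γ)
    (h₁₂ : p₁ ≤ p₂) (hq : p₂ + γ ≤ q) :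
    |exp (p₁ * L) - exp (p₂ * L)| ≤ (p₂ - p₁) / γ * exp (q * L) := by
  have hmono : exp (p₁ * L) ≤ exp (p₂ * L) := exp_le_exp.2 (by nlinarith)
  have hconvex : exp (p₂ * L) - exp (p₁ * L) ≤ (p₂ - p₁) * L * exp (p₂ * L) := by
    have hsplit : exp (p₁ * L) = exp ((p₁ - p₂) * L) * exp (p₂ * L) := by
      rw [← exp_add]; ring_nf
    nlinarith [add_one_le_exp ((p₁ - p₂) * L), exp_pos (p₂ * L)]
  have habsorb : γ * L * exp (p₂ * L) ≤ exp (q * L) :=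
    calc γ * L * exp (p₂ * L) ≤ exp ((q - p₂) * L) * exp (p₂ * L) := by
          gcongr
          nlinarith [add_one_le_exp ((q - p₂) * L)]
      _ = exp (q * L) := by rw [← exp_add]; ring_nf
  rw [abs_sub_comm, abs_of_nonneg (sub_nonneg.2 hmono)]
  calc _ ≤ (p₂ - p₁) * L * exp (p₂ * L) := hconvex
    _ = (p₂ - p₁) / γ * (γ * L * exp (p₂ * L)) := by field_simp
    _ ≤ _ := by gcongr

lemma abs_rpow_sub_rpow_le {t p₀ p₁ p₂ q γ : ℝ} (ht : 0 ≤ t) (hγ : 0 < γ)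
    (h₀ : p₀ + γ ≤ p₁) (h₁₂ : p₁ ≤ p₂) (h₂ : p₂ + γ ≤ q) (hq : q < 0) :
    |t ^ p₁ - t ^ p₂| ≤ (p₂ - p₁) / γ * (t ^ p₀ + t ^ q) := by
  rcases ht.eq_or_lt with rfl | ht
  · simp [zero_rpow (by linarith : p₀ ≠ 0), zero_rpow (by linarith : p₁ ≠ 0),
      zero_rpow (by linarith : p₂ ≠ 0), zero_rpow hq.ne]
  simp only [rpow_def_of_pos ht, mul_comm (log t)]
  rcases le_total 0 (log t) with hL | hL
  · calc _ ≤ (p₂ - p₁) / γ * exp (q * log t) := abs_exp_mul_sub_exp_mul_le hL hγ h₁₂ h₂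
      _ ≤ _ := by gcongr; exact le_add_of_nonneg_left (exp_pos _).le
  · have := abs_exp_mul_sub_exp_mul_le (neg_nonneg.2 hL) hγ (neg_le_neg h₁₂)
      (by linarith : -p₁ + γ ≤ -p₀)
    simp only [neg_sub_neg, neg_mul_neg] at this
    rw [abs_sub_comm]
    calc _ ≤ _ := this
      _ ≤ _ := by gcongr; exact le_add_of_nonneg_right (exp_pos _).le

lemma rpow_le_rpow_add_one {t p q : ℝ} (ht : 0 ≤ t) (hpq : p ≤ q) (hq : q ≤ 0) :
    t ^ q ≤ t ^ p + 1 := by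
  rcases ht.eq_or_lt with rfl | ht
  · linarith [zero_rpow_le_one q, zero_rpow_nonneg p]
  rcases le_total t 1 with h | h
  · linarith [rpow_le_rpow_of_exponent_ge ht h hpq]
  · linarith [rpow_le_one_of_one_le_of_nonpos h hq, rpow_nonneg ht.le p]

lemma exists_rpow_le_two_mul_abs_rpow_sub_rpow_add {p₁ p₂ : ℝ} (h₁₂ : p₁ < p₂) (h₂ : p₂ < 0) :
    ∃ C, ∀ t : ℝ, 0 ≤ t → t ^ p₁ ≤ 2 * |t ^ p₁ - t ^ p₂| + C := by
  set t₀ := (1 / 2 : ℝ) ^ (p₂ - p₁)⁻¹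
  have ht₀ : 0 < t₀ := by positivity
  refine ⟨t₀ ^ p₁, fun t ht => ?_⟩
  rcases le_total t t₀ with h | h
  · -- below `t₀` the term `t ^ p₂ = t ^ (p₂ - p₁) * t ^ p₁` is at most half of `t ^ p₁`
    have hsmall : t ^ (p₂ - p₁) ≤ 1 / 2 :=
      calc t ^ (p₂ - p₁) ≤ t₀ ^ (p₂ - p₁) := rpow_le_rpow ht h (by linarith)
        _ = 1 / 2 := rpow_inv_rpow (by norm_num) (by linarith)
    have hsplit : t ^ p₂ = t ^ (p₂ - p₁) * t ^ p₁ := by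
      rw [← rpow_add' ht (by rw [sub_add_cancel]; exact h₂.ne), sub_add_cancel]
    nlinarith [rpow_nonneg ht p₁, le_abs_self (t ^ p₁ - t ^ p₂), rpow_nonneg ht₀.le p₁]
  · linarith [rpow_le_rpow_of_nonpos ht₀ h (by linarith : p₁ ≤ 0),
      abs_nonneg (t ^ p₁ - t ^ p₂)]

end Real

lemma integrableOn_iff_of_mul_le_of_le_mul {α : Type*} [MeasurableSpace α] {μ : Measure α}
    {f g : α → ℝ} {S : Set α} {m M : ℝ} (hS : MeasurableSet S) (hm : 0 < m)
    (hf : AEStronglyMeasurable f (μ.restrict S)) (hg : AEStronglyMeasurable g (μ.restrict S))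
    (hg₀ : ∀ s ∈ S, 0 ≤ g s) (hlow : ∀ s ∈ S, m * g s ≤ f s) (hup : ∀ s ∈ S, f s ≤ M * g s) :
    IntegrableOn f S μ ↔ IntegrableOn g S μ := by
  refine ⟨fun H => H.const_mul m⁻¹ |>.mono' hg ?_, fun H => H.const_mul M |>.mono' hf ?_⟩
  all_goals
    rw [ae_restrict_iff' hS]
    refine Filter.Eventually.of_forall fun s hs => ?_
  · rw [norm_of_nonneg (hg₀ s hs), le_inv_mul_iff₀ hm]
    exact hlow s hs
  · rw [norm_of_nonneg ((mul_nonneg hm.le (hg₀ s hs)).trans (hlow s hs))]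
    exact hup s hs

lemma abs_integral_le_mul_integral_of_abs_le {α : Type*} [MeasurableSpace α] {μ : Measure α}
    {F G : α → ℝ} {c : ℝ} (hc : 0 ≤ c) (hG : ∀ s, 0 ≤ G s) (hFG : ∀ s, |F s| ≤ c * G s)
    (hint : Integrable F μ → Integrable G μ) :
    |∫ s, F s ∂μ| ≤ c * ∫ s, G s ∂μ := by
  by_cases hF : Integrable F μ
  · calc |∫ s, F s ∂μ| ≤ ∫ s, c * G s ∂μ :=
          norm_integral_le_of_norm_le (f := F) ((hint hF).const_mul c) (ae_of_all _ hFG)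
      _ = c * ∫ s, G s ∂μ := integral_const_mul c _
  · rw [integral_undef hF, abs_zero]
    exact mul_nonneg hc (integral_nonneg hG)

lemma integrableOn_Ioc_sub_rpow_iff {r v u : ℝ} (hvu : v < u) :
    IntegrableOn (fun s => (s - v) ^ r) (Ioc v u) ↔ -1 < r := by
  have key := (measurePreserving_add_right volume v).integrableOn_comp_preimage
    (measurableEmbedding_addRight v) (f := fun s : ℝ => (s - v) ^ r) (s := Ioc v u)
  have hcomp : ((fun s : ℝ => (s - v) ^ r) ∘ fun t => t + v) = fun t : ℝ => t ^ r := by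
    funext t; simp
  rw [hcomp, preimage_add_const_Ioc, sub_self] at key
  rw [← key, integrableOn_Ioc_iff_integrableOn_Ioo]
  exact intervalIntegral.integrableOn_Ioo_rpow_iff (by linarith)

section prodPosPart

variable {ι : Type*} [Fintype ι]

noncomputable def prodPosPart (s : ℝ) (x : ι → ℝ) : ℝ :=
  ∏ ℓ, max (s - x ℓ) 0

lemma prodPosPart_nonneg (s : ℝ) (x : ι → ℝ) : 0 ≤ prodPosPart s x :=
  prod_nonneg fun _ _ => le_max_right _ _

lemma prodPosPart_pos {s : ℝ} {x : ι → ℝ} (hs : ∀ ℓ, x ℓ < s) : 0 < prodPosPart s x :=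
  prod_pos fun ℓ _ => lt_max_of_lt_left (sub_pos.2 (hs ℓ))

lemma prodPosPart_eq_zero {s : ℝ} {x : ι → ℝ} {ℓ : ι} (hs : s ≤ x ℓ) : prodPosPart s x = 0 :=
  prod_eq_zero (mem_univ ℓ) (max_eq_right (sub_nonpos.2 hs))

@[fun_prop]
lemma continuous_prodPosPart (x : ι → ℝ) : Continuous fun s => prodPosPart s x := by
  unfold prodPosPart
  fun_prop

lemma prodPosPart_eq_pow_mul_prod {x : ι → ℝ} {s₀ s : ℝ} (hx : ∀ ℓ, x ℓ ≤ s₀) (hs : s₀ ≤ s) :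
    prodPosPart s x = (s - s₀) ^ #{ℓ | x ℓ = s₀} * ∏ ℓ with x ℓ ≠ s₀, (s - x ℓ) := by
  rw [prodPosPart, ← prod_filter_mul_prod_filter_not univ (fun ℓ => x ℓ = s₀)]
  congr 1
  · rw [prod_congr rfl fun ℓ hℓ => by rw [(mem_filter.1 hℓ).2], prod_const,
      max_eq_left (sub_nonneg.2 hs)]
  · exact prod_congr rfl fun ℓ _ => max_eq_left (sub_nonneg.2 ((hx ℓ).trans hs))

lemma integrableOn_Ioc_prodPosPart_rpow_iff {x : ι → ℝ} {s₀ u p : ℝ} (hx : ∀ ℓ, x ℓ ≤ s₀)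
    (hu : s₀ < u) (hp : p ≤ 0) :
    IntegrableOn (fun s => prodPosPart s x ^ p) (Ioc s₀ u) ↔ -1 < p * #{ℓ | x ℓ = s₀} := by
  set k := #{ℓ | x ℓ = s₀}
  set Q : ℝ → ℝ := fun s => ∏ ℓ with x ℓ ≠ s₀, (s - x ℓ)
  have hQ_mono : ∀ ⦃s t⦄, s₀ ≤ s → s ≤ t → Q s ≤ Q t := fun s t hs hst =>
    prod_le_prod (fun ℓ _ => sub_nonneg.2 ((hx ℓ).trans hs)) fun ℓ _ => by linarith
  have hQ_pos : ∀ s, s₀ ≤ s → 0 < Q s := fun s hs =>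
    (prod_pos fun ℓ hℓ => sub_pos.2 ((hx ℓ).lt_of_ne (mem_filter.1 hℓ).2)).trans_le
      (hQ_mono le_rfl hs)
  have hQ_bounds : ∀ s ∈ Ioc s₀ u, Q u ^ p ≤ Q s ^ p ∧ Q s ^ p ≤ Q s₀ ^ p := fun s hs =>
    ⟨rpow_le_rpow_of_nonpos (hQ_pos s hs.1.le) (hQ_mono hs.1.le hs.2) hp,
      rpow_le_rpow_of_nonpos (hQ_pos s₀ le_rfl) (hQ_mono le_rfl hs.1.le) hp⟩
  have hfactor : ∀ s ∈ Ioc s₀ u, prodPosPart s x ^ p = Q s ^ p * (s - s₀) ^ (p * k) :=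
    fun s hs => by
      rw [prodPosPart_eq_pow_mul_prod hx hs.1.le, mul_rpow (pow_nonneg (sub_nonneg.2 hs.1.le) _)
        (hQ_pos s hs.1.le).le, mul_comm p, rpow_mul (sub_nonneg.2 hs.1.le), rpow_natCast,
        mul_comm]
  have hpow_nonneg : ∀ s ∈ Ioc s₀ u, 0 ≤ (s - s₀) ^ (p * k) := fun s hs =>
    rpow_nonneg (sub_nonneg.2 hs.1.le) _
  rw [← integrableOn_Ioc_sub_rpow_iff hu]
  exact integrableOn_iff_of_mul_le_of_le_mul measurableSet_Ioc
    (rpow_pos_of_pos (hQ_pos u hu.le) p) (by fun_prop : Measurable _).aestronglyMeasurable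
    (by fun_prop : Measurable _).aestronglyMeasurable hpow_nonneg
    (fun s hs => hfactor s hs ▸ mul_le_mul_of_nonneg_right (hQ_bounds s hs).1 (hpow_nonneg s hs))
    (fun s hs => hfactor s hs ▸ mul_le_mul_of_nonneg_right (hQ_bounds s hs).2 (hpow_nonneg s hs))

lemma MeasureTheory.IntegrableOn.prodPosPart_rpow_of_le_neg_half [Nonempty ι] {x : ι → ℝ}
    {v u p₀ p₁ : ℝ} (hp₀ : -1 < p₀) (hp₀' : p₀ < 0) (hp₁ : p₁ ≤ -1 / 2)
    (H : IntegrableOn (fun s => prodPosPart s x ^ p₁) (Ioc v u)) :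
    IntegrableOn (fun s => prodPosPart s x ^ p₀) (Ioc v u) := by
  obtain ⟨ℓ₀, hℓ₀⟩ := Finite.exists_max x
  set s₀ := x ℓ₀
  have hvanish : ∀ s ≤ s₀, prodPosPart s x ^ p₀ = 0 := fun s hs => by
    rw [prodPosPart_eq_zero hs, zero_rpow hp₀'.ne]
  rcases lt_or_ge s₀ v with hv | hv
  · refine ContinuousOn.integrableOn_Icc ?_ |>.mono_set Ioc_subset_Icc_self
    exact (continuous_prodPosPart x).continuousOn.rpow_const fun s hs =>
      Or.inl (prodPosPart_pos fun ℓ => (hℓ₀ ℓ).trans_lt (hv.trans_le hs.1)).ne'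
  rcases le_or_gt u s₀ with hu | hu
  · exact (integrableOn_congr_fun (fun s hs => hvanish s (hs.2.trans hu)) measurableSet_Ioc).2
      integrableOn_zero
  -- the top singularity `s₀` is simple, since `(s - s₀) ^ (p₁ * k)` with `k ≥ 2` is not integrable
  have hsimple : #{ℓ | x ℓ = s₀} = 1 := by
    have hpos : 0 < #{ℓ | x ℓ = s₀} := card_pos.2 ⟨ℓ₀, by simp [s₀]⟩
    have := (integrableOn_Ioc_prodPosPart_rpow_iff hℓ₀ hu (by linarith)).1
      (H.mono_set (Ioc_subset_Ioc_left hv))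
    have : (#{ℓ | x ℓ = s₀} : ℝ) < 2 := by nlinarith
    norm_cast at this
    omega
  have htop : IntegrableOn (fun s => prodPosPart s x ^ p₀) (Ioc s₀ u) :=
    (integrableOn_Ioc_prodPosPart_rpow_iff hℓ₀ hu hp₀'.le).2 (by simpa [hsimple])
  rw [← Ioc_union_Ioc_eq_Ioc hv hu.le]
  exact ((integrableOn_congr_fun (fun s hs => hvanish s hs.2) measurableSet_Ioc).2
    integrableOn_zero).union htop

lemma MeasureTheory.IntegrableOn.prodPosPart_rpow_add_of_sub [Nonempty ι] {x : ι → ℝ}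
    {v u p₀ p₁ p₂ q : ℝ} (hp₀ : -1 < p₀) (hp₀q : p₀ ≤ q) (hq : q < 0) (h₁₂ : p₁ < p₂)
    (hp₁ : p₁ ≤ -1 / 2) (hp₂ : p₂ < 0)
    (H : IntegrableOn (fun s => prodPosPart s x ^ p₁ - prodPosPart s x ^ p₂) (Ioc v u)) :
    IntegrableOn (fun s => prodPosPart s x ^ p₀ + prodPosPart s x ^ q) (Ioc v u) := by
  obtain ⟨C, hC⟩ := exists_rpow_le_two_mul_abs_rpow_sub_rpow_add h₁₂ hp₂
  have h₁ : IntegrableOn (fun s => prodPosPart s x ^ p₁) (Ioc v u) :=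
    (H.abs.const_mul 2).add (integrableOn_const (C := C) measure_Ioc_lt_top.ne) |>.mono'
      (by fun_prop : Measurable _).aestronglyMeasurable <| ae_of_all _ fun s => by
        rw [norm_of_nonneg (rpow_nonneg (prodPosPart_nonneg s x) _)]
        exact hC _ (prodPosPart_nonneg s x)
  have h₀ := h₁.prodPosPart_rpow_of_le_neg_half hp₀ (hp₀q.trans_lt hq) hp₁
  refine h₀.add <| (h₀.add (integrableOn_const (C := (1 : ℝ)) measure_Ioc_lt_top.ne)).mono'
    (by fun_prop : Measurable _).aestronglyMeasurable <| ae_of_all _ fun s => ?_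
  rw [norm_of_nonneg (rpow_nonneg (prodPosPart_nonneg s x) _)]
  exact rpow_le_rpow_add_one (prodPosPart_nonneg s x) hp₀q hq.le

end prodPosPart

noncomputable def hermiteExponent (d : ℕ) (h : ℝ) : ℝ :=
  (h - 1) / d - 1 / 2

lemma hermiteKernel_eq_prodPosPart_rpow (d : ℕ) (h s : ℝ) (x : Fin d → ℝ) :
    hermiteKernel d h s x = prodPosPart s x ^ hermiteExponent d h :=
  finsetProd_rpow _ _ (fun _ _ => le_max_right _ _) _

lemma hermiteExponent_sub_hermiteExponent (d : ℕ) (h₁ h₂ : ℝ) :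
    hermiteExponent d h₂ - hermiteExponent d h₁ = (h₂ - h₁) / d := by
  unfold hermiteExponent
  ring

lemma hermiteExponent_add_div (d : ℕ) (h δ : ℝ) :
    hermiteExponent d h + δ / d = hermiteExponent d (h + δ) := by
  unfold hermiteExponent
  ring

lemma hermiteExponent_strictMono {d : ℕ} (hd : 0 < d) : StrictMono (hermiteExponent d) :=
  fun h₁ h₂ h => by
    have := hermiteExponent_sub_hermiteExponent d h₁ h₂
    have : 0 < (h₂ - h₁) / d := by have := sub_pos.2 h; positivity
    linarith

lemma hermiteExponent_le_neg_half {d : ℕ} {h : ℝ} (hh : h ≤ 1) :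
    hermiteExponent d h ≤ -1 / 2 := by
  have : (h - 1) / d ≤ 0 := div_nonpos_of_nonpos_of_nonneg (by linarith) d.cast_nonneg
  unfold hermiteExponent
  linarith

lemma hermiteExponent_neg {d : ℕ} {h : ℝ} (hh : h ≤ 1) : hermiteExponent d h < 0 :=
  (hermiteExponent_le_neg_half hh).trans_lt (by norm_num)

lemma neg_one_lt_hermiteExponent {d : ℕ} (hd : 0 < d) {h : ℝ} (hh : 1 / 2 < h) :
    -1 < hermiteExponent d h := by
  have hd' : (1 : ℝ) ≤ d := by exact_mod_cast hd
  have : -1 / 2 < (h - 1) / d := by rw [lt_div_iff₀ (by linarith)]; nlinarith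
  unfold hermiteExponent
  linarith

lemma abs_rpow_hermiteExponent_sub_le {d : ℕ} (hd : 0 < d) {a b h₁ h₂ ε t : ℝ} (hε : 0 < ε)
    (ha : a + ε ≤ h₁) (h₁₂ : h₁ ≤ h₂) (hb : h₂ + ε ≤ b) (hb₁ : b ≤ 1) (ht : 0 ≤ t) :
    |t ^ hermiteExponent d h₁ - t ^ hermiteExponent d h₂| ≤
      ε⁻¹ * |h₁ - h₂| * (t ^ hermiteExponent d a + t ^ hermiteExponent d b) := by
  have hmono := (hermiteExponent_strictMono hd).monotone
  have hcoef : (hermiteExponent d h₂ - hermiteExponent d h₁) / (ε / d) = ε⁻¹ * |h₁ - h₂| := by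
    rw [hermiteExponent_sub_hermiteExponent, abs_sub_comm, abs_of_nonneg (sub_nonneg.2 h₁₂)]
    field_simp
  rw [← hcoef]
  refine abs_rpow_sub_rpow_le ht (by positivity) ?_ (hmono h₁₂) ?_ (hermiteExponent_neg hb₁)
  · rw [hermiteExponent_add_div]
    exact hmono ha
  · rw [hermiteExponent_add_div]
    exact hmono hb

theorem hermiteKernel_diff_bound_general (d : ℕ) (hd : 1 ≤ d) (a b ε : ℝ)
    (hε : 0 < ε)
    (hεab : 1/2 < a - ε ∧ b + ε < 1) :
    ∃ c : ℝ, 0 < c ∧ ∀ h₁ h₂ : ℝ, a ≤ h₁ → h₁ ≤ h₂ → h₂ ≤ b → ∀ u : ℝ, 0 ≤ u →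
      ∀ x : Fin d → ℝ,
        |∫ s in Set.Ioc (0:ℝ) u, (hermiteKernel d h₁ s x - hermiteKernel d h₂ s x)| ≤
          c * |h₁ - h₂| *
            ∫ s in Set.Ioc (0:ℝ) u, (hermiteKernel d (a - ε) s x + hermiteKernel d (b + ε) s x) := by
  refine ⟨ε⁻¹, inv_pos.2 hε, fun h₁ h₂ ha₁ h₁₂ h₂b u _ x => ?_⟩
  have : Nonempty (Fin d) := ⟨⟨0, hd⟩⟩
  simp only [hermiteKernel_eq_prodPosPart_rpow]
  rcases h₁₂.eq_or_lt with rfl | hlt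
  · simp
  exact abs_integral_le_mul_integral_of_abs_le (by positivity)
    (fun s => add_nonneg (rpow_nonneg (prodPosPart_nonneg s x) _)
      (rpow_nonneg (prodPosPart_nonneg s x) _))
    (fun s => abs_rpow_hermiteExponent_sub_le hd hε (by linarith) h₁₂ (by linarith) hεab.2.le
      (prodPosPart_nonneg s x))
    (IntegrableOn.prodPosPart_rpow_add_of_sub (neg_one_lt_hermiteExponent hd hεab.1)
      ((hermiteExponent_strictMono hd).monotone (by linarith)) (hermiteExponent_neg hεab.2.le)
      (hermiteExponent_strictMono hd hlt) (hermiteExponent_le_neg_half (by linarith))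
      (hermiteExponent_neg (by linarith)))

/-- Mean-value-type estimate: for `1/2 < a - ε < b + ε < 1` there is `c_ε > 0` such that for
all `a ≤ h₁ ≤ h₂ ≤ b`, `u ≥ 0` and `x ∈ ℝ^d`,
`|∫_0^u (f_{h₁} - f_{h₂})(s,x) ds| ≤ c_ε |h₁ - h₂| ∫_0^u (f_{a-ε} + f_{b+ε})(s,x) ds`. -/
theorem hermiteKernel_diff_bound (d : ℕ) (hd : 1 ≤ d) (a b ε : ℝ)
    (hab : 1/2 < a ∧ a < b ∧ b < 1) (hε : 0 < ε)
    (hεab : 1/2 < a - ε ∧ b + ε < 1) :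
    ∃ c : ℝ, 0 < c ∧ ∀ h₁ h₂ : ℝ, a ≤ h₁ → h₁ ≤ h₂ → h₂ ≤ b → ∀ u : ℝ, 0 ≤ u →
      ∀ x : Fin d → ℝ,
        |∫ s in Set.Ioc (0:ℝ) u, (hermiteKernel d h₁ s x - hermiteKernel d h₂ s x)| ≤
          c * |h₁ - h₂| *
            ∫ s in Set.Ioc (0:ℝ) u, (hermiteKernel d (a - ε) s x + hermiteKernel d (b + ε) s x) :=
  hermiteKernel_diff_bound_general d hd a b ε hε hεab
end

section
/- Let a > 0, p ≥ 1 and α > 1/p. There exists a deterministic constant c (depending only on a, p, α) such that for every continuous function f : [0,a] → ℝ and every t ∈ [0,a], |f(t) − f(0)|^p ≤ c · t^{αp−1} · ∬_{[0,a]²} |f(r) − f(v)|^p |r − v|^{−αp−1} dr dv, whenever the double integral is finite. -/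
/-!
A Campanato-type chaining argument. If `I' ⊆ I ⊆ [0, a]` are intervals with `|I'| = |I| / 2`,
Jensen's inequality for the product measure on `I × I'` together with `|x - y| ≤ |I|` there gives
`|⨍_I f - ⨍_{I'} f| ^ p ≤ 2 |I| ^ (α p - 1) B`. Along the dyadic intervals `[0, t 2⁻ⁿ]` and
`[t - t 2⁻ⁿ, t]` these differences decay geometrically with ratio `2 ^ (-(α - 1/p)) < 1`, the
averages converge to `f 0` and `f t` by continuity, and both chains start at `⨍_{[0, t]} f`.
-/

open MeasureTheory Set Filter Topology

section ProductAverage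

variable {X Y E : Type*} [MeasurableSpace X] [MeasurableSpace Y] [NormedAddCommGroup E]
  [NormedSpace ℝ E] {μ : Measure X} {ν : Measure Y} [IsFiniteMeasure μ] [IsFiniteMeasure ν]

theorem average_fun_fst [NeZero ν] (g : X → E) : ⨍ z, g z.1 ∂μ.prod ν = ⨍ x, g x ∂μ := by
  rw [average_eq, average_eq, integral_fun_fst, ← univ_prod_univ, measureReal_prod_prod,
    smul_smul, mul_inv, mul_assoc, inv_mul_cancel₀ measureReal_univ_ne_zero, mul_one]

theorem average_fun_snd [NeZero μ] (g : Y → E) : ⨍ z, g z.2 ∂μ.prod ν = ⨍ y, g y ∂ν := by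
  rw [average_eq, average_eq, integral_fun_snd, ← univ_prod_univ, measureReal_prod_prod,
    smul_smul, mul_inv, mul_right_comm, inv_mul_cancel₀ measureReal_univ_ne_zero, one_mul]

end ProductAverage

theorem abs_average_le_average_abs {X : Type*} [MeasurableSpace X] (μ : Measure X) (g : X → ℝ) :
    |⨍ x, g x ∂μ| ≤ ⨍ x, |g x| ∂μ := by
  simpa only [average_eq, smul_eq_mul, abs_mul, abs_inv, abs_of_nonneg measureReal_nonneg] using
    mul_le_mul_of_nonneg_left abs_integral_le_integral_abs (inv_nonneg.2 measureReal_nonneg)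

theorem abs_average_sub_average_rpow_le {X : Type*} [MeasurableSpace X] {μ ν : Measure X}
    [IsFiniteMeasure μ] [IsFiniteMeasure ν] [NeZero μ] [NeZero ν] {p : ℝ} (hp : 1 ≤ p)
    {f : X → ℝ} (hfμ : Integrable f μ) (hfν : Integrable f ν)
    (hf : Integrable (fun z => |f z.1 - f z.2| ^ p) (μ.prod ν)) :
    |⨍ x, f x ∂μ - ⨍ x, f x ∂ν| ^ p ≤ ⨍ z, |f z.1 - f z.2| ^ p ∂μ.prod ν := by
  have : NeZero (μ.prod ν) := ⟨Measure.measure_univ_ne_zero.1 <| by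
    rw [← univ_prod_univ, Measure.prod_prod]
    exact mul_ne_zero (NeZero.ne _) (NeZero.ne _)⟩
  have hsub : Integrable (fun z : X × X => f z.1 - f z.2) (μ.prod ν) :=
    (hfμ.comp_fst ν).sub (hfν.comp_snd μ)
  have hdiff : ⨍ z, (f z.1 - f z.2) ∂μ.prod ν = ⨍ x, f x ∂μ - ⨍ x, f x ∂ν := by
    rw [average_eq, integral_sub (hfμ.comp_fst ν) (hfν.comp_snd μ), smul_sub, ← average_eq,
      ← average_eq, average_fun_fst, average_fun_snd]
  calc |⨍ x, f x ∂μ - ⨍ x, f x ∂ν| ^ p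
      ≤ (⨍ z, |f z.1 - f z.2| ∂μ.prod ν) ^ p := by
        rw [← hdiff]
        exact Real.rpow_le_rpow (abs_nonneg _) (abs_average_le_average_abs _ _) (by linarith)
    _ ≤ ⨍ z, |f z.1 - f z.2| ^ p ∂μ.prod ν :=
        (convexOn_rpow hp).map_average_le
          (continuousOn_id.rpow_const fun _ _ => Or.inr (by linarith)) isClosed_Ici
          (ae_of_all _ fun _ => abs_nonneg (α := ℝ) _) hsub.abs hf

theorem tendsto_setAverage_of_continuousWithinAt {X ι : Type*} [PseudoMetricSpace X]
    [MeasurableSpace X] {μ : Measure X} {l : Filter ι} {f : X → ℝ} {s : Set X} {x₀ : X}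
    (hf : ContinuousWithinAt f s x₀) {J : ι → Set X} {r : ι → ℝ} (hr : Tendsto r l (𝓝 0))
    (hJs : ∀ i, J i ⊆ s) (hJr : ∀ i, J i ⊆ Metric.closedBall x₀ (r i))
    (hJ₀ : ∀ i, μ (J i) ≠ 0) (hJ : ∀ i, μ (J i) ≠ ⊤) (hfJ : ∀ i, IntegrableOn f (J i) μ) :
    Tendsto (fun i => ⨍ x in J i, f x ∂μ) l (𝓝 (f x₀)) := by
  have hconv : ∀ z : ι → X, (∀ i, z i ∈ J i) → Tendsto (fun i => f (z i)) l (𝓝 (f x₀)) := by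
    intro z hz
    refine hf.tendsto.comp (tendsto_nhdsWithin_iff.2 ⟨?_, .of_forall fun i => hJs i (hz i)⟩)
    exact tendsto_iff_dist_tendsto_zero.2
      (squeeze_zero (fun _ => dist_nonneg) (fun i => hJr i (hz i)) hr)
  choose x hxJ hx using fun i => exists_le_setAverage (hJ₀ i) (hJ i) (hfJ i)
  choose y hyJ hy using fun i => exists_setAverage_le (hJ₀ i) (hJ i) (hfJ i)
  exact tendsto_of_tendsto_of_tendsto_of_le_of_le (hconv x hxJ) (hconv y hyJ) hx hy

theorem ae_fst_ne_snd (μ ν : Measure ℝ) [SFinite ν] [NullSingletonClass ν] :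
    ∀ᵐ q ∂μ.prod ν, q.1 ≠ q.2 :=
  (Measure.ae_prod_iff_ae_ae (measurableSet_eq_fun measurable_fst measurable_snd).compl).2
    (ae_of_all _ fun x => by simpa [eq_comm] using ν.ae_ne x)

/-- The `p`-th power of the Gagliardo seminorm of `f` in `W^{α,p}(S)`. -/
noncomputable def gagliardoIntegral (S : Set ℝ) (p α : ℝ) (f : ℝ → ℝ) : ℝ :=
  ∫ q : ℝ × ℝ, |f q.1 - f q.2| ^ p * |q.1 - q.2| ^ (-(α * p) - 1)
    ∂((volume.restrict S).prod (volume.restrict S))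

theorem gagliardoIntegral_nonneg (S : Set ℝ) (p α : ℝ) (f : ℝ → ℝ) :
    0 ≤ gagliardoIntegral S p α f :=
  integral_nonneg fun _ => by positivity

theorem integral_abs_sub_rpow_le_gagliardoIntegral {S I J : Set ℝ} (hI : I ⊆ S) (hJ : J ⊆ S)
    (hIm : MeasurableSet I) (hJm : MeasurableSet J) {p α d : ℝ} (hαp : -1 ≤ α * p) (hd : 0 ≤ d)
    {f : ℝ → ℝ} (hdist : ∀ x ∈ I, ∀ y ∈ J, |x - y| ≤ d)
    (hint : Integrable (fun q : ℝ × ℝ => |f q.1 - f q.2| ^ p * |q.1 - q.2| ^ (-(α * p) - 1))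
      ((volume.restrict S).prod (volume.restrict S))) :
    ∫ q, |f q.1 - f q.2| ^ p ∂(volume.restrict I).prod (volume.restrict J)
      ≤ d ^ (α * p + 1) * gagliardoIntegral S p α f := by
  have hrestrict : (volume.restrict I).prod (volume.restrict J)
      = ((volume.restrict S).prod (volume.restrict S)).restrict (I ×ˢ J) := by
    rw [← Measure.restrict_restrict_of_subset hI, ← Measure.restrict_restrict_of_subset hJ,
      Measure.prod_restrict]
  have hpointwise : ∀ᵐ q ∂(volume.restrict I).prod (volume.restrict J), |f q.1 - f q.2| ^ p
      ≤ d ^ (α * p + 1) * (|f q.1 - f q.2| ^ p * |q.1 - q.2| ^ (-(α * p) - 1)) := by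
    have hmem : ∀ᵐ q ∂(volume.restrict I).prod (volume.restrict J), q ∈ I ×ˢ J := by
      rw [hrestrict]; exact ae_restrict_mem (hIm.prod hJm)
    filter_upwards [hmem, ae_fst_ne_snd _ _] with q hq hne
    have hpos : 0 < |q.1 - q.2| := abs_pos.2 (sub_ne_zero.2 hne)
    have hcancel : |q.1 - q.2| ^ (α * p + 1) * |q.1 - q.2| ^ (-(α * p) - 1) = 1 := by
      rw [← Real.rpow_add hpos]; norm_num
    calc |f q.1 - f q.2| ^ p
        = |q.1 - q.2| ^ (α * p + 1) * (|f q.1 - f q.2| ^ p * |q.1 - q.2| ^ (-(α * p) - 1)) := by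
          rw [mul_left_comm, hcancel, mul_one]
      _ ≤ d ^ (α * p + 1) * (|f q.1 - f q.2| ^ p * |q.1 - q.2| ^ (-(α * p) - 1)) := by
          gcongr
          · linarith
          · exact hdist _ hq.1 _ hq.2
  calc ∫ q, |f q.1 - f q.2| ^ p ∂(volume.restrict I).prod (volume.restrict J)
      ≤ ∫ q, d ^ (α * p + 1) * (|f q.1 - f q.2| ^ p * |q.1 - q.2| ^ (-(α * p) - 1))
          ∂(volume.restrict I).prod (volume.restrict J) :=
        integral_mono_of_nonneg (ae_of_all _ fun _ => by positivity)
          (hrestrict ▸ hint.restrict.const_mul _) hpointwise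
    _ ≤ d ^ (α * p + 1) * gagliardoIntegral S p α f := by
        rw [integral_const_mul, hrestrict]
        gcongr
        exact setIntegral_le_integral hint (ae_of_all _ fun _ => by positivity)

theorem abs_setAverage_sub_setAverage_rpow_le {S : Set ℝ} {p α b c b' c' : ℝ} (hp : 1 ≤ p)
    (hαp : -1 ≤ α * p) (hb' : b' < c') (hsub : Icc b' c' ⊆ Icc b c) (hS : Icc b c ⊆ S)
    {f : ℝ → ℝ} (hf : ContinuousOn f (Icc b c))
    (hint : Integrable (fun q : ℝ × ℝ => |f q.1 - f q.2| ^ p * |q.1 - q.2| ^ (-(α * p) - 1))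
      ((volume.restrict S).prod (volume.restrict S))) :
    |(⨍ x in Icc b c, f x) - ⨍ x in Icc b' c', f x| ^ p
      ≤ (c - b) ^ (α * p + 1) / ((c - b) * (c' - b')) * gagliardoIntegral S p α f := by
  obtain ⟨hbb', hc'c⟩ := (Icc_subset_Icc_iff hb'.le).1 hsub
  have hb : b < c := by linarith
  have : NeZero (volume.restrict (Icc b c)) := ⟨by simp [hb]⟩
  have : NeZero (volume.restrict (Icc b' c')) := ⟨by simp [hb']⟩
  set ρ := (volume.restrict (Icc b c)).prod (volume.restrict (Icc b' c')) with hρdef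
  have hρ : ρ = volume.restrict (Icc b c ×ˢ Icc b' c') := by
    rw [hρdef, Measure.prod_restrict, ← Measure.volume_eq_prod]
  have hρuniv : ρ.real univ = (c - b) * (c' - b') := by
    rw [← univ_prod_univ, measureReal_prod_prod]
    simp [Real.volume_real_Icc, hb.le, hb'.le]
  have hcont : ContinuousOn (fun q : ℝ × ℝ => |f q.1 - f q.2| ^ p) (Icc b c ×ˢ Icc b' c') :=
    ((hf.comp continuousOn_fst fun _ hq => hq.1).sub
      (hf.comp continuousOn_snd fun _ hq => hsub hq.2)).abs.rpow_const
      fun _ _ => Or.inr (by linarith)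
  have hdist : ∀ x ∈ Icc b c, ∀ y ∈ Icc b' c', |x - y| ≤ c - b := fun x hx y hy =>
    abs_sub_le_iff.2 ⟨by linarith [hx.2, hy.1], by linarith [hx.1, hy.2]⟩
  calc |(⨍ x in Icc b c, f x) - ⨍ x in Icc b' c', f x| ^ p
      ≤ ⨍ q, |f q.1 - f q.2| ^ p ∂ρ :=
        abs_average_sub_average_rpow_le hp (hf.integrableOn_Icc (μ := volume))
          ((hf.mono hsub).integrableOn_Icc (μ := volume))
          (by rw [← hρdef, hρ]; exact hcont.integrableOn_compact (isCompact_Icc.prod isCompact_Icc))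
    _ = ((c - b) * (c' - b'))⁻¹ * ∫ q, |f q.1 - f q.2| ^ p ∂ρ := by
        rw [average_eq, hρuniv, smul_eq_mul]
    _ ≤ ((c - b) * (c' - b'))⁻¹ * ((c - b) ^ (α * p + 1) * gagliardoIntegral S p α f) := by
        gcongr
        exact integral_abs_sub_rpow_le_gagliardoIntegral hS (hsub.trans hS) measurableSet_Icc
          measurableSet_Icc hαp (by linarith) hdist hint
    _ = (c - b) ^ (α * p + 1) / ((c - b) * (c' - b')) * gagliardoIntegral S p α f := by ring

theorem div_two_pow_rpow {t : ℝ} (ht : 0 ≤ t) (γ : ℝ) (n : ℕ) :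
    (t / 2 ^ n) ^ γ = t ^ γ * ((2 ^ γ)⁻¹) ^ n := by
  rw [Real.div_rpow ht (by positivity), ← Real.rpow_natCast_mul zero_le_two, mul_comm,
    Real.rpow_mul_natCast zero_le_two, div_eq_mul_inv, inv_pow]

theorem abs_setAverage_sub_le_of_antitone {S : Set ℝ} {p α t x₀ : ℝ} {l : ℕ → ℝ} (hp : 1 ≤ p)
    (hα : p⁻¹ < α) (ht : 0 < t) (hJ : Antitone fun n : ℕ => Icc (l n) (l n + t / 2 ^ n))
    (hx₀ : ∀ n : ℕ, x₀ ∈ Icc (l n) (l n + t / 2 ^ n)) (hS : Icc (l 0) (l 0 + t) ⊆ S)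
    {f : ℝ → ℝ} (hf : ContinuousOn f (Icc (l 0) (l 0 + t)))
    (hint : Integrable (fun q : ℝ × ℝ => |f q.1 - f q.2| ^ p * |q.1 - q.2| ^ (-(α * p) - 1))
      ((volume.restrict S).prod (volume.restrict S))) :
    |(⨍ x in Icc (l 0) (l 0 + t), f x) - f x₀|
      ≤ (2 * gagliardoIntegral S p α f) ^ p⁻¹ * t ^ (α - p⁻¹) / (1 - (2 ^ (α - p⁻¹))⁻¹) := by
  have hp₀ : 0 < p := by linarith
  have hαp : 1 < α * p := by linarith [(inv_lt_iff_one_lt_mul₀ hp₀).1 hα]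
  set E := gagliardoIntegral S p α f
  have hE : 0 ≤ E := gagliardoIntegral_nonneg S p α f
  set γ := α - p⁻¹
  have hγ : 0 < γ := sub_pos.2 hα
  have hγp : (α * p - 1) * p⁻¹ = γ := by simp only [γ]; field_simp
  have hs : ∀ n : ℕ, 0 < t / 2 ^ n := fun n => by positivity
  have hJ₀ : ∀ n, Icc (l n) (l n + t / 2 ^ n) ⊆ Icc (l 0) (l 0 + t) := fun n => by
    simpa using hJ (Nat.zero_le n)
  have hstep : ∀ n : ℕ, dist (⨍ x in Icc (l n) (l n + t / 2 ^ n), f x)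
      (⨍ x in Icc (l (n + 1)) (l (n + 1) + t / 2 ^ (n + 1)), f x)
      ≤ (2 * E) ^ p⁻¹ * t ^ γ * ((2 ^ γ)⁻¹) ^ n := by
    intro n
    have key := abs_setAverage_sub_setAverage_rpow_le hp (by linarith)
      (lt_add_of_pos_right _ (hs (n + 1))) (hJ n.le_succ) ((hJ₀ n).trans hS) (hf.mono (hJ₀ n)) hint
    have hhalf : t / 2 ^ (n + 1) = t / 2 ^ n / 2 := by rw [pow_succ, div_div]
    have hkernel : (t / 2 ^ n) ^ (α * p + 1) / (t / 2 ^ n * (t / 2 ^ n / 2))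
        = 2 * (t / 2 ^ n) ^ (α * p - 1) := by
      rw [show α * p + 1 = α * p - 1 + 2 by ring, Real.rpow_add (hs n), Real.rpow_two]
      field_simp
    simp only [add_sub_cancel_left, hhalf, hkernel] at key
    calc dist _ _ = (|(⨍ x in Icc (l n) (l n + t / 2 ^ n), f x)
          - ⨍ x in Icc (l (n + 1)) (l (n + 1) + t / 2 ^ n / 2), f x| ^ p) ^ p⁻¹ := by
          rw [Real.dist_eq, hhalf, Real.rpow_rpow_inv (abs_nonneg _) hp₀.ne']
      _ ≤ (2 * (t / 2 ^ n) ^ (α * p - 1) * E) ^ p⁻¹ := by gcongr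
      _ = (2 * E) ^ p⁻¹ * (t / 2 ^ n) ^ γ := by
          rw [mul_right_comm, Real.mul_rpow (by positivity) (by positivity),
            ← Real.rpow_mul (hs n).le, hγp]
      _ = (2 * E) ^ p⁻¹ * t ^ γ * ((2 ^ γ)⁻¹) ^ n := by
          rw [div_two_pow_rpow ht.le, mul_assoc]
  have hlim : Tendsto (fun n : ℕ => ⨍ x in Icc (l n) (l n + t / 2 ^ n), f x) atTop (𝓝 (f x₀)) := by
    refine tendsto_setAverage_of_continuousWithinAt (hf x₀ (hJ₀ 0 (hx₀ 0)))
      (tendsto_const_nhds (x := t).div_atTop (tendsto_pow_atTop_atTop_of_one_lt one_lt_two)) hJ₀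
      (fun n x hx => ?_) (fun n => by simp [hs n]) (fun n => by simp)
      (fun n => (hf.mono (hJ₀ n)).integrableOn_Icc)
    rw [Metric.mem_closedBall, Real.dist_eq, abs_sub_le_iff]
    constructor <;> linarith [hx.1, hx.2, (hx₀ n).1, (hx₀ n).2]
  have hr : (2 ^ γ)⁻¹ < (1 : ℝ) := inv_lt_one_of_one_lt₀ (Real.one_lt_rpow one_lt_two hγ)
  simpa [Real.dist_eq] using dist_le_of_le_geometric_of_tendsto₀ _ _ hr hstep hlim

theorem abs_sub_le_of_gagliardoIntegral {S : Set ℝ} {p α t : ℝ} (hp : 1 ≤ p) (hα : p⁻¹ < α)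
    (ht : 0 < t) (hS : Icc 0 t ⊆ S) {f : ℝ → ℝ} (hf : ContinuousOn f (Icc 0 t))
    (hint : Integrable (fun q : ℝ × ℝ => |f q.1 - f q.2| ^ p * |q.1 - q.2| ^ (-(α * p) - 1))
      ((volume.restrict S).prod (volume.restrict S))) :
    |f t - f 0|
      ≤ 2 * ((2 * gagliardoIntegral S p α f) ^ p⁻¹ * t ^ (α - p⁻¹) / (1 - (2 ^ (α - p⁻¹))⁻¹)) := by
  have hlen : Antitone fun n : ℕ => t / 2 ^ n := fun m n hmn =>
    div_le_div_of_nonneg_left ht.le (by positivity) (pow_le_pow_right₀ one_le_two hmn)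
  have hleft := abs_setAverage_sub_le_of_antitone (l := fun _ => 0) (x₀ := 0) hp hα ht
    (fun m n hmn => Icc_subset_Icc le_rfl (by simpa using hlen hmn))
    (fun n => ⟨le_rfl, by positivity⟩) (by simpa using hS) (by simpa using hf) hint
  have hright := abs_setAverage_sub_le_of_antitone (l := fun n => t - t / 2 ^ n) (x₀ := t) hp hα
    ht (fun m n hmn => by simpa using Icc_subset_Icc_left (sub_le_sub_left (hlen hmn) t))
    (fun n => ⟨sub_le_self t (by positivity), (sub_add_cancel t _).ge⟩)
    (by simpa using hS) (by simpa using hf) hint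
  simp only [pow_zero, div_one, sub_self, zero_add] at hleft hright
  calc |f t - f 0| = |((⨍ x in Icc 0 t, f x) - f 0) - ((⨍ x in Icc 0 t, f x) - f t)| := by ring_nf
    _ ≤ _ := (abs_sub _ _).trans (by linarith)

theorem abs_sub_rpow_le_of_gagliardoIntegral {S : Set ℝ} {p α t : ℝ} (hp : 1 ≤ p)
    (hα : p⁻¹ < α) (ht : 0 < t) (hS : Icc 0 t ⊆ S) {f : ℝ → ℝ} (hf : ContinuousOn f (Icc 0 t))
    (hint : Integrable (fun q : ℝ × ℝ => |f q.1 - f q.2| ^ p * |q.1 - q.2| ^ (-(α * p) - 1))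
      ((volume.restrict S).prod (volume.restrict S))) :
    |f t - f 0| ^ p ≤ 2 ^ p * 2 / (1 - (2 ^ (α - p⁻¹))⁻¹) ^ p * t ^ (α * p - 1)
      * gagliardoIntegral S p α f := by
  have hp₀ : 0 < p := by linarith
  have hE := gagliardoIntegral_nonneg S p α f
  have hr : (2 ^ (α - p⁻¹))⁻¹ < (1 : ℝ) :=
    inv_lt_one_of_one_lt₀ (Real.one_lt_rpow one_lt_two (sub_pos.2 hα))
  have hexp : (α - p⁻¹) * p = α * p - 1 := by field_simp
  calc |f t - f 0| ^ p
      ≤ (2 * ((2 * gagliardoIntegral S p α f) ^ p⁻¹ * t ^ (α - p⁻¹)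
          / (1 - (2 ^ (α - p⁻¹))⁻¹))) ^ p :=
        Real.rpow_le_rpow (abs_nonneg _) (abs_sub_le_of_gagliardoIntegral hp hα ht hS hf hint)
          hp₀.le
    _ = _ := by
        rw [Real.mul_rpow zero_le_two (by bound), Real.div_rpow (by positivity) (by linarith),
          Real.mul_rpow (by positivity) (by positivity), Real.rpow_inv_rpow (by positivity) hp₀.ne',
          ← Real.rpow_mul ht.le, hexp]
        ring

theorem garsia_rodemich_rumsey_corollary_general (a p α : ℝ) (hp : 1 ≤ p)
    (hα : 1 / p < α) :
    ∃ c : ℝ, 0 < c ∧ ∀ f : ℝ → ℝ, ContinuousOn f (Set.Icc 0 a) →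
      Integrable (fun q : ℝ × ℝ => |f q.1 - f q.2| ^ p * |q.1 - q.2| ^ (-(α * p) - 1))
        ((volume.restrict (Set.Icc 0 a)).prod (volume.restrict (Set.Icc 0 a))) →
      ∀ t ∈ Set.Icc (0:ℝ) a,
        |f t - f 0| ^ p ≤ c * t ^ (α * p - 1) *
          ∫ q : ℝ × ℝ, |f q.1 - f q.2| ^ p * |q.1 - q.2| ^ (-(α * p) - 1)
            ∂((volume.restrict (Set.Icc 0 a)).prod (volume.restrict (Set.Icc 0 a))) := by
  rw [one_div] at hα
  have hp₀ : 0 < p := by linarith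
  have hr : (2 ^ (α - p⁻¹))⁻¹ < (1 : ℝ) :=
    inv_lt_one_of_one_lt₀ (Real.one_lt_rpow one_lt_two (sub_pos.2 hα))
  refine ⟨2 ^ p * 2 / (1 - (2 ^ (α - p⁻¹))⁻¹) ^ p,
    div_pos (by positivity) (Real.rpow_pos_of_pos (sub_pos.2 hr) p), ?_⟩
  intro f hf hint t ht
  rcases ht.1.eq_or_lt with rfl | ht₀
  · have hαp : α * p - 1 ≠ 0 := by linarith [(inv_lt_iff_one_lt_mul₀ hp₀).1 hα]
    simp [Real.zero_rpow hp₀.ne', Real.zero_rpow hαp]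
  · exact abs_sub_rpow_le_of_gagliardoIntegral hp hα ht₀ (Icc_subset_Icc_right ht.2)
      (hf.mono (Icc_subset_Icc_right ht.2)) hint

/-- Garsia–Rodemich–Rumsey corollary: for `a > 0`, `p ≥ 1`, `α > 1/p`, there is a constant
`c` depending only on `a, p, α` such that for every continuous `f : [0,a] → ℝ` and every
`t ∈ [0,a]`, whenever the double integral is finite,
`|f(t) - f(0)|^p ≤ c t^{αp-1} ∬_{[0,a]²} |f(r)-f(v)|^p |r-v|^{-αp-1} dr dv`. -/
theorem garsia_rodemich_rumsey_corollary (a p α : ℝ) (ha : 0 < a) (hp : 1 ≤ p)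
    (hα : 1 / p < α) :
    ∃ c : ℝ, 0 < c ∧ ∀ f : ℝ → ℝ, ContinuousOn f (Set.Icc 0 a) →
      Integrable (fun q : ℝ × ℝ => |f q.1 - f q.2| ^ p * |q.1 - q.2| ^ (-(α * p) - 1))
        ((volume.restrict (Set.Icc 0 a)).prod (volume.restrict (Set.Icc 0 a))) →
      ∀ t ∈ Set.Icc (0:ℝ) a,
        |f t - f 0| ^ p ≤ c * t ^ (α * p - 1) *
          ∫ q : ℝ × ℝ, |f q.1 - f q.2| ^ p * |q.1 - q.2| ^ (-(α * p) - 1)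
            ∂((volume.restrict (Set.Icc 0 a)).prod (volume.restrict (Set.Icc 0 a))) :=
  garsia_rodemich_rumsey_corollary_general a p α hp hα
end
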